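/- Let φ be a satisfiable 3-CNF formula over n Boolean variables with total encoding Q(φ)(x, a) = ∑_{k=1}^m Q(l_{k,1}(x), l_{k,2}(x), l_{k,3}(x), a_k), and fix indices i, j ∈ {1, …, n}. Then every satisfying assignment x of φ has x_i = x_j if and only if every global minimizer (x, a) of Q(φ) over {0,1}^n × {0,1}^m has x_i = x_j. -/

import Mathlib

/-- The clause-encoding function
`Q(x1,x2,x3,xc) = xc·(2 − (x1+x2+x3)) + (x1·x2 + x2·x3 + x3·x1) − (x1+x2+x3) + 1`. -/
def clauseQ (x1 x2 x3 xc : ℤ) : ℤ :=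
  xc * (2 - (x1 + x2 + x3)) + (x1 * x2 + x2 * x3 + x3 * x1) - (x1 + x2 + x3) + 1

/-- A vector is Boolean when every coordinate is 0 or 1. -/
def BoolVec {n : ℕ} (x : Fin n → ℤ) : Prop := ∀ i, x i = 0 ∨ x i = 1

/-- A literal over `n` variables: a variable index together with a polarity
(`true` = positive literal, `false` = negated literal). -/
abbrev Literal (n : ℕ) := Fin n × Bool

/-- The value of a literal under an assignment: the coordinate `x j` for a positive
literal, and the Boolean negation `1 - x j` for a negated literal. -/
def litVal {n : ℕ} (l : Literal n) (x : Fin n → ℤ) : ℤ :=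
  if l.2 then x l.1 else 1 - x l.1

/-- A 3-SAT clause: a triple of literals. -/
abbrev Clause3 (n : ℕ) := Literal n × Literal n × Literal n

/-- A clause is satisfied exactly when at least one of its literal values equals 1. -/
def clauseSat {n : ℕ} (c : Clause3 n) (x : Fin n → ℤ) : Prop :=
  litVal c.1 x = 1 ∨ litVal c.2.1 x = 1 ∨ litVal c.2.2 x = 1

instance {n : ℕ} (c : Clause3 n) (x : Fin n → ℤ) : Decidable (clauseSat c x) := by
  unfold clauseSat; infer_instance

/-- An assignment satisfies a 3-CNF formula when it satisfies every clause. -/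
def SatCNF {n m : ℕ} (φ : Fin m → Clause3 n) (x : Fin n → ℤ) : Prop :=
  ∀ k, clauseSat (φ k) x

/-- The total encoding `Q(φ)(x, a) = ∑ₖ Q(l_{k,1}(x), l_{k,2}(x), l_{k,3}(x), aₖ)`. -/
def Qtot {n m : ℕ} (φ : Fin m → Clause3 n) (x : Fin n → ℤ) (a : Fin m → ℤ) : ℤ :=
  ∑ k, clauseQ (litVal (φ k).1 x) (litVal (φ k).2.1 x) (litVal (φ k).2.2 x) (a k)

/-- A global minimizer of `Q(φ)` over `{0,1}^n × {0,1}^m`. -/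
def GlobalMin {n m : ℕ} (φ : Fin m → Clause3 n) (x : Fin n → ℤ) (a : Fin m → ℤ) : Prop :=
  BoolVec x ∧ BoolVec a ∧
    ∀ (x' : Fin n → ℤ) (a' : Fin m → ℤ), BoolVec x' → BoolVec a' →
      Qtot φ x a ≤ Qtot φ x' a'

lemma litVal_bool {n : ℕ} (l : Literal n) {x : Fin n → ℤ} (hx : BoolVec x) :
    litVal l x = 0 ∨ litVal l x = 1 := by
  unfold litVal
  rcases hx l.1 with h | h <;> rcases l.2 with _ | _ <;> simp [h]

lemma clauseQ_nonneg {x1 x2 x3 xc : ℤ}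
    (h1 : x1 = 0 ∨ x1 = 1) (h2 : x2 = 0 ∨ x2 = 1) (h3 : x3 = 0 ∨ x3 = 1)
    (hc : xc = 0 ∨ xc = 1) : 0 ≤ clauseQ x1 x2 x3 xc := by
  rcases h1 with h1 | h1 <;> rcases h2 with h2 | h2 <;> rcases h3 with h3 | h3 <;>
    rcases hc with hc | hc <;> subst h1 <;> subst h2 <;> subst h3 <;> subst hc <;>
    norm_num [clauseQ]

lemma clauseQ_eq_zero {x1 x2 x3 : ℤ}
    (h1 : x1 = 0 ∨ x1 = 1) (h2 : x2 = 0 ∨ x2 = 1) (h3 : x3 = 0 ∨ x3 = 1)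
    (hs : x1 = 1 ∨ x2 = 1 ∨ x3 = 1) :
    clauseQ x1 x2 x3 (if x1 = 1 ∧ x2 = 1 ∧ x3 = 1 then 1 else 0) = 0 := by
  rcases h1 with h1 | h1 <;> rcases h2 with h2 | h2 <;> rcases h3 with h3 | h3 <;>
    subst h1 <;> subst h2 <;> subst h3 <;> revert hs <;> norm_num [clauseQ]

lemma clauseQ_pos {x1 x2 x3 xc : ℤ} (hc : xc = 0 ∨ xc = 1)
    (h1 : x1 = 0) (h2 : x2 = 0) (h3 : x3 = 0) : 1 ≤ clauseQ x1 x2 x3 xc := by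
  rcases hc with hc | hc <;> subst h1 <;> subst h2 <;> subst h3 <;> subst hc <;>
    norm_num [clauseQ]

lemma Qtot_nonneg {n m : ℕ} (φ : Fin m → Clause3 n) {x : Fin n → ℤ} {a : Fin m → ℤ}
    (hx : BoolVec x) (ha : BoolVec a) : 0 ≤ Qtot φ x a := by
  apply Finset.sum_nonneg
  intro k _
  exact clauseQ_nonneg (litVal_bool _ hx) (litVal_bool _ hx) (litVal_bool _ hx) (ha k)

/-- The canonical auxiliary vector for a satisfying assignment. -/
def auxA {n m : ℕ} (φ : Fin m → Clause3 n) (x : Fin n → ℤ) (k : Fin m) : ℤ :=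
  if litVal (φ k).1 x = 1 ∧ litVal (φ k).2.1 x = 1 ∧ litVal (φ k).2.2 x = 1 then 1 else 0

lemma auxA_bool {n m : ℕ} (φ : Fin m → Clause3 n) (x : Fin n → ℤ) : BoolVec (auxA φ x) := by
  intro k; unfold auxA; split <;> simp

lemma Qtot_auxA {n m : ℕ} (φ : Fin m → Clause3 n) {x : Fin n → ℤ}
    (hx : BoolVec x) (hs : SatCNF φ x) : Qtot φ x (auxA φ x) = 0 := by
  apply Finset.sum_eq_zero
  intro k _
  exact clauseQ_eq_zero (litVal_bool _ hx) (litVal_bool _ hx) (litVal_bool _ hx) (hs k)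

/-- For a satisfiable 3-CNF formula `φ` and fixed variable indices `i, j`: every
satisfying assignment `x` of `φ` has `x i = x j` iff every global minimizer `(x, a)`
of `Q(φ)` over `{0,1}^n × {0,1}^m` has `x i = x j`. -/
theorem allSatEqual_iff_allMinEqual {n m : ℕ} (φ : Fin m → Clause3 n)
    (hsat : ∃ x : Fin n → ℤ, BoolVec x ∧ SatCNF φ x) (i j : Fin n) :
    (∀ x : Fin n → ℤ, BoolVec x → SatCNF φ x → x i = x j) ↔
    (∀ (x : Fin n → ℤ) (a : Fin m → ℤ), GlobalMin φ x a → x i = x j) := by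
  obtain ⟨x₀, hx₀, hs₀⟩ := hsat
  have hmin0 : ∀ (x : Fin n → ℤ) (a : Fin m → ℤ), GlobalMin φ x a → Qtot φ x a = 0 := by
    intro x a ⟨hx, ha, hle⟩
    have h1 := hle x₀ (auxA φ x₀) hx₀ (auxA_bool φ x₀)
    rw [Qtot_auxA φ hx₀ hs₀] at h1
    exact le_antisymm h1 (Qtot_nonneg φ hx ha)
  constructor
  · intro H x a hmin
    obtain ⟨hx, ha, hle⟩ := hmin
    have hz := hmin0 x a ⟨hx, ha, hle⟩
    have hsat' : SatCNF φ x := by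
      intro k
      by_contra hk
      unfold clauseSat at hk
      push_neg at hk
      obtain ⟨hk1, hk2, hk3⟩ := hk
      have e1 : litVal (φ k).1 x = 0 := (litVal_bool _ hx).resolve_right hk1
      have e2 : litVal (φ k).2.1 x = 0 := (litVal_bool _ hx).resolve_right hk2
      have e3 : litVal (φ k).2.2 x = 0 := (litVal_bool _ hx).resolve_right hk3
      have hterm : ∀ k' ∈ Finset.univ, (0:ℤ) ≤
          clauseQ (litVal (φ k').1 x) (litVal (φ k').2.1 x) (litVal (φ k').2.2 x) (a k') :=
        fun k' _ => clauseQ_nonneg (litVal_bool _ hx) (litVal_bool _ hx) (litVal_bool _ hx) (ha k')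
      have hge : (1:ℤ) ≤ Qtot φ x a := le_trans (clauseQ_pos (ha k) e1 e2 e3)
        (Finset.single_le_sum hterm (Finset.mem_univ k))
      omega
    exact H x hx hsat'
  · intro H x hx hsx
    apply H x (auxA φ x)
    refine ⟨hx, auxA_bool φ x, ?_⟩
    intro x' a' hx' ha'
    rw [Qtot_auxA φ hx hsx]
    exact Qtot_nonneg φ hx' ha'
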